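/- Let S = (P, L) be a generalized quadrangle of order (2,t) and let (R, ψ) be a representation of S (not necessarily faithful). Then R is an elementary abelian 2-group, i.e., R is abelian and every element of R has order at most 2. -/

import Mathlib

open scoped Classical

/-- A slim partial linear space: a nonempty point set, a nonempty collection of
lines each of which is a 3-element set of points, such that any two distinct
points lie in at most one common line. -/
structure SlimPLS (P : Type*) where
  lines : Set (Finset P)
  nonempty_pts : Nonempty P
  nonempty_lines : lines.Nonempty
  three_points : ∀ l ∈ lines, l.card = 3
  unique_line : ∀ l₁ ∈ lines, ∀ l₂ ∈ lines, ∀ x y : P,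
    x ≠ y → x ∈ l₁ → y ∈ l₁ → x ∈ l₂ → y ∈ l₂ → l₁ = l₂

namespace SlimPLS

variable {P : Type*}

/-- Two points are collinear if they are distinct and lie on a common line. -/
def Collinear (S : SlimPLS P) (x y : P) : Prop :=
  x ≠ y ∧ ∃ l ∈ S.lines, x ∈ l ∧ y ∈ l

/-- The collinearity graph of a slim partial linear space. -/
def graph (S : SlimPLS P) : SimpleGraph P where
  Adj x y := S.Collinear x y
  symm := ⟨fun x y h => ⟨Ne.symm h.1, h.2.elim fun l hl => ⟨l, hl.1, hl.2.2, hl.2.1⟩⟩⟩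
  loopless := ⟨fun x h => h.1 rfl⟩

/-- `S` is a generalized quadrangle of order `(2, t)`: it is connected, no point
is collinear with all other points, every point is on exactly `t+1` lines, and
for every point `x` and line `l` with `x ∉ l` there is exactly one point of `l`
collinear with `x`. -/
def IsGQ (S : SlimPLS P) (t : ℕ) : Prop :=
  S.graph.Connected ∧
  (∀ x : P, ∃ y : P, y ≠ x ∧ ¬ S.Collinear x y) ∧
  (∀ x : P, {l | l ∈ S.lines ∧ x ∈ l}.ncard = t + 1) ∧
  (∀ x : P, ∀ l ∈ S.lines, x ∉ l → ∃! y : P, y ∈ l ∧ S.Collinear x y)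

/-- A set of points is an arc if its points are pairwise non-collinear. -/
def IsArc (S : SlimPLS P) (T : Set P) : Prop :=
  ∀ x ∈ T, ∀ y ∈ T, x ≠ y → ¬ S.Collinear x y

/-- `{a,b,c}` is a complete 3-arc: three pairwise distinct, pairwise
non-collinear points not contained in a 4-arc. -/
def Complete3Arc (S : SlimPLS P) (a b c : P) : Prop :=
  a ≠ b ∧ a ≠ c ∧ b ≠ c ∧ S.IsArc {a, b, c} ∧
  ∀ d : P, d ∉ ({a, b, c} : Set P) → ¬ S.IsArc (insert d {a, b, c})

/-- `{a,b,c}` is a complete 3-arc of the subset `Q`: three pairwise distinct,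
pairwise non-collinear points of `Q` not contained in a 4-arc inside `Q`. -/
def Complete3ArcIn (S : SlimPLS P) (Q : Set P) (a b c : P) : Prop :=
  a ∈ Q ∧ b ∈ Q ∧ c ∈ Q ∧ a ≠ b ∧ a ≠ c ∧ b ≠ c ∧ S.IsArc {a, b, c} ∧
  ∀ d ∈ Q, d ∉ ({a, b, c} : Set P) → ¬ S.IsArc (insert d {a, b, c})

/-- `Q` is a sub-generalized-quadrangle of order `(2,t)` of `S`: together with
the lines of `S` contained in it, `Q` is a `(2,t)`-GQ; in particular any line
meeting `Q` in at least two points is contained in `Q`. -/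
def IsSubGQ (S : SlimPLS P) (Q : Set P) (t : ℕ) : Prop :=
  Q.Nonempty ∧
  (∃ l ∈ S.lines, (l : Set P) ⊆ Q) ∧
  (∀ l ∈ S.lines, ∀ x ∈ l, ∀ y ∈ l, x ≠ y → x ∈ Q → y ∈ Q → (l : Set P) ⊆ Q) ∧
  (SimpleGraph.induce Q S.graph).Connected ∧
  (∀ x ∈ Q, ∃ y ∈ Q, y ≠ x ∧ ¬ S.Collinear x y) ∧
  (∀ x ∈ Q, {l | l ∈ S.lines ∧ x ∈ l ∧ (l : Set P) ⊆ Q}.ncard = t + 1) ∧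
  (∀ x ∈ Q, ∀ l ∈ S.lines, (l : Set P) ⊆ Q → x ∉ l → ∃! y : P, y ∈ l ∧ S.Collinear x y)

/-- `S` is a near hexagon: connected of diameter 3, no point collinear with all
other points, and for every point `x` and line `l` there is a unique point of
`l` nearest to `x`. -/
def IsNearHexagon (S : SlimPLS P) : Prop :=
  S.graph.Connected ∧
  (∀ x y : P, S.graph.dist x y ≤ 3) ∧
  (∃ x y : P, S.graph.dist x y = 3) ∧
  (∀ x : P, ∃ y : P, y ≠ x ∧ ¬ S.Collinear x y) ∧
  (∀ x : P, ∀ l ∈ S.lines, ∃! y : P, y ∈ l ∧ ∀ z ∈ l, S.graph.dist x y ≤ S.graph.dist x z)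

/-- `S` is dense: any two points at distance 2 have at least two common
neighbours. -/
def IsDense (S : SlimPLS P) : Prop :=
  ∀ x y : P, S.graph.dist x y = 2 →
    ∃ u v : P, u ≠ v ∧ S.Collinear x u ∧ S.Collinear u y ∧ S.Collinear x v ∧ S.Collinear v y

/-- `Q` is a quad: a convex subset of diameter 2 in which no point is collinear
with all other points of `Q`. -/
def IsQuad (S : SlimPLS P) (Q : Set P) : Prop :=
  (∀ u ∈ Q, ∀ v ∈ Q, ∀ w : P,
      S.graph.dist u w + S.graph.dist w v = S.graph.dist u v → w ∈ Q) ∧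
  (∀ u ∈ Q, ∀ v ∈ Q, S.graph.dist u v ≤ 2) ∧
  (∃ u ∈ Q, ∃ v ∈ Q, S.graph.dist u v = 2) ∧
  (∀ u ∈ Q, ∃ v ∈ Q, v ≠ u ∧ ¬ S.Collinear u v)

/-- A quad `Q` is of type `(2, t₂)` if every point of `Q` lies on exactly
`t₂ + 1` lines contained in `Q`. -/
def QuadType (S : SlimPLS P) (Q : Set P) (t₂ : ℕ) : Prop :=
  ∀ x ∈ Q, {l | l ∈ S.lines ∧ x ∈ l ∧ (l : Set P) ⊆ Q}.ncard = t₂ + 1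

/-- The point-quad pair `(x, Q)` is classical: there is a unique point `y ∈ Q`
nearest to `x`, with `d(x,z) = d(x,y) + d(y,z)` for all `z ∈ Q`. -/
def IsClassicalPair (S : SlimPLS P) (x : P) (Q : Set P) : Prop :=
  ∃! y : P, y ∈ Q ∧ ∀ z ∈ Q, S.graph.dist x z = S.graph.dist x y + S.graph.dist y z

/-- A quad is classical (big) if every point-quad pair with it is classical. -/
def IsClassicalQuad (S : SlimPLS P) (Q : Set P) : Prop :=
  ∀ x : P, S.IsClassicalPair x Q

/-- A subspace: any line containing two of its points is contained in it. -/
def IsSubspace (S : SlimPLS P) (X : Set P) : Prop :=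
  ∀ l ∈ S.lines, ∀ x ∈ l, ∀ y ∈ l, x ≠ y → x ∈ X → y ∈ X → (l : Set P) ⊆ X

/-- The subspace generated by a set of points. -/
def subspaceGen (S : SlimPLS P) (A : Set P) : Set P :=
  ⋂₀ {X | S.IsSubspace X ∧ A ⊆ X}

/-- `NPdim S` is the rank over `F₂` of the distance-3 adjacency matrix. -/
noncomputable def NPdim [Fintype P] (S : SlimPLS P) : ℕ :=
  Matrix.rank (Matrix.of fun x y : P => if S.graph.dist x y = 3 then (1 : ZMod 2) else 0)

/-- `dimV S` is the dimension of the universal representation module of `S`: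
the free `F₂`-vector space on the points modulo the span of the elements
`v_x + v_y + v_z` for the lines `{x,y,z}`. -/
noncomputable def dimV (S : SlimPLS P) : ℕ :=
  Module.finrank (ZMod 2)
    ((P →₀ ZMod 2) ⧸ Submodule.span (ZMod 2)
      {f : P →₀ ZMod 2 | ∃ l ∈ S.lines, f = ∑ x ∈ l, Finsupp.single x 1})

end SlimPLS

/-- A representation of a slim partial linear space `S`: an assignment of an
order-2 element `r x` of `R` to each point `x`, such that the images generate
`R` and for every line `{x,y,z}` the set `{1, r x, r y, r z}` is a Klein four
subgroup (`r x * r y = r z` for the three pairwise distinct points of a line). -/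
structure SlimPLS.Rep {P : Type*} (S : SlimPLS P) (R : Type*) [Group R] where
  r : P → R
  order_two : ∀ x : P, orderOf (r x) = 2
  gen : Subgroup.closure (Set.range r) = ⊤
  line_rel : ∀ l ∈ S.lines, ∀ x ∈ l, ∀ y ∈ l, ∀ z ∈ l,
    x ≠ y → x ≠ z → y ≠ z → r x * r y = r z

/-- A finite 2-group is extraspecial if its Frattini subgroup, commutator
subgroup and center coincide and have order 2. -/
def IsExtraspecial (G : Type*) [Group G] : Prop :=
  Finite G ∧ IsPGroup 2 G ∧ frattini G = commutator G ∧
    commutator G = Subgroup.center G ∧ Nat.card (Subgroup.center G) = 2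

/-!
Two collinear points give commuting involutions by the Klein relations on their line. Two
non-collinear points `x`, `y` of a `(2,t)`-GQ (where necessarily `t ≥ 1`) are opposite corners
of a `3 × 3` grid of lines: project `x` onto two lines through `y` and close up the
configuration using that a point off a line sees exactly one of its points. In the grid,
`r x * r y` equals both `r a₀ * r b₀` and `r a₁ * r b₁`, and the third row and column turn
`(r x * r y)²` into `r b₁ * r b₁ = 1`. So the generators commute pairwise, and `R` is abelian
and generated by involutions.
-/

theorem mul_comm_of_grid {G : Type*} [Group G] {g₁₁ g₁₂ g₁₃ g₂₁ g₂₂ g₂₃ g₃₁ g₃₂ g₃₃ : G}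
    (h₁₁ : g₁₁ * g₁₁ = 1) (h₂₂ : g₂₂ * g₂₂ = 1) (h₁₂ : g₁₂ * g₁₂ = 1) (h₂₁ : g₂₁ * g₂₁ = 1)
    (h₂₃ : g₂₃ * g₂₃ = 1)
    (row₁ : g₁₃ * g₁₂ = g₁₁) (row₂ : g₂₁ * g₂₃ = g₂₂) (row₃ : g₃₂ * g₃₁ = g₃₃)
    (col₁ : g₃₁ * g₂₁ = g₁₁) (col₂ : g₁₂ * g₃₂ = g₂₂) (col₃ : g₁₃ * g₃₃ = g₂₃) :
    g₁₁ * g₂₂ = g₂₂ * g₁₁ := by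
  have via_row₁ : g₁₁ * g₂₂ = g₁₃ * g₃₂ := by
    rw [← row₁, ← col₂, mul_assoc, ← mul_assoc g₁₂, h₁₂, one_mul]
  have via_col₁ : g₁₁ * g₂₂ = g₃₁ * g₂₃ := by
    rw [← col₁, ← row₂, mul_assoc, ← mul_assoc g₂₁, h₂₁, one_mul]
  have hsq : g₁₁ * g₂₂ * (g₁₁ * g₂₂) = 1 := by
    calc g₁₁ * g₂₂ * (g₁₁ * g₂₂) = g₁₃ * (g₃₂ * g₃₁) * g₂₃ := by
          nth_rw 1 [via_row₁]; rw [via_col₁]; simp only [mul_assoc]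
      _ = 1 := by rw [row₃, col₃, h₂₃]
  calc g₁₁ * g₂₂ = (g₁₁ * g₂₂)⁻¹ := (inv_eq_of_mul_eq_one_right hsq).symm
    _ = g₂₂ * g₁₁ := by
      rw [mul_inv_rev, inv_eq_of_mul_eq_one_right h₁₁, inv_eq_of_mul_eq_one_right h₂₂]

namespace Subgroup

variable {G : Type*} [Group G] {k : Set G}

theorem mul_comm_of_closure_eq_top (hk : closure k = ⊤) (hcomm : ∀ x ∈ k, ∀ y ∈ k, x * y = y * x)
    (a b : G) : a * b = b * a :=
  Set.centralizer_centralizer_comm_of_comm hcomm a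
    (closure_le_centralizer_centralizer k (hk ▸ mem_top a)) b
    (closure_le_centralizer_centralizer k (hk ▸ mem_top b))

theorem mul_self_eq_one_of_closure_eq_top (hk : closure k = ⊤) (hcomm : ∀ a b : G, a * b = b * a)
    (hinv : ∀ x ∈ k, x * x = 1) (a : G) : a * a = 1 := by
  induction (hk ▸ mem_top a : a ∈ closure k) using closure_induction with
  | mem x hx => exact hinv x hx
  | one => exact mul_one 1
  | mul x y _ _ hx hy =>
    rw [mul_assoc, ← mul_assoc y, hcomm y x, mul_assoc, ← mul_assoc, hx, hy, one_mul]
  | inv x _ hx => rw [← mul_inv_rev, hx, inv_one]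

end Subgroup

namespace SlimPLS

variable {P : Type*} {S : SlimPLS P} {p x y z : P}

def IsLine (S : SlimPLS P) (x y z : P) : Prop :=
  x ≠ y ∧ x ≠ z ∧ y ≠ z ∧ ∃ l ∈ S.lines, x ∈ l ∧ y ∈ l ∧ z ∈ l

theorem Collinear.symm (h : S.Collinear x y) : S.Collinear y x :=
  SimpleGraph.Adj.symm (G := S.graph) h

namespace IsLine

theorem swap_left (h : S.IsLine x y z) : S.IsLine y x z :=
  let ⟨hxy, hxz, hyz, l, hl, hx, hy, hz⟩ := h
  ⟨hxy.symm, hyz, hxz, l, hl, hy, hx, hz⟩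

theorem swap_right (h : S.IsLine x y z) : S.IsLine x z y :=
  let ⟨hxy, hxz, hyz, l, hl, hx, hy, hz⟩ := h
  ⟨hxz, hxy, hyz.symm, l, hl, hx, hz, hy⟩

theorem collinear (h : S.IsLine x y z) : S.Collinear x y :=
  let ⟨hxy, _, _, l, hl, hx, hy, _⟩ := h
  ⟨hxy, l, hl, hx, hy⟩

end IsLine

theorem eq_or_eq_or_eq_of_mem_line {l : Finset P} (hl : l ∈ S.lines) (hx : x ∈ l) (hy : y ∈ l)
    (hz : z ∈ l) (hxy : x ≠ y) (hxz : x ≠ z) (hyz : y ≠ z) (hp : p ∈ l) :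
    p = x ∨ p = y ∨ p = z := by
  have hcard : ({x, y, z} : Finset P).card = l.card := by
    rw [S.three_points l hl, Finset.card_insert_of_notMem (by simp [hxy, hxz]),
      Finset.card_pair hyz]
  have heq : ({x, y, z} : Finset P) = l :=
    Finset.eq_of_subset_of_card_le (by simp [Finset.insert_subset_iff, hx, hy, hz]) hcard.ge
  simpa [← heq] using hp

theorem exists_third_point {l : Finset P} (hl : l ∈ S.lines) (x y : P) : ∃ z ∈ l, z ≠ x ∧ z ≠ y := by
  by_contra! h
  have hsub : l ⊆ {x, y} := fun z hz => by
    by_cases hzx : z = x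
    · simp [hzx]
    · simp [h z hz hzx]
  have := (Finset.card_le_card hsub).trans Finset.card_le_two
  rw [S.three_points l hl] at this
  omega

theorem Collinear.exists_isLine (h : S.Collinear x y) : ∃ z, S.IsLine x y z := by
  obtain ⟨hxy, l, hl, hx, hy⟩ := h
  obtain ⟨z, hz, hzx, hzy⟩ := exists_third_point hl x y
  exact ⟨z, hxy, hzx.symm, hzy.symm, l, hl, hx, hy, hz⟩

namespace IsGQ

variable {t : ℕ} (hGQ : S.IsGQ t)
include hGQ

/-- Were `t = 0`, a point not collinear with `y` would project onto the line through `y` at a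
point lying on two lines. -/
theorem exists_two_lines_through (y : P) :
    ∃ l ∈ S.lines, ∃ m ∈ S.lines, y ∈ l ∧ y ∈ m ∧ l ≠ m := by
  obtain ⟨-, hfar, hcount, hproj⟩ := hGQ
  have hpos : ∀ w, {l | l ∈ S.lines ∧ w ∈ l}.ncard ≠ 0 := fun w => by rw [hcount w]; omega
  obtain ⟨l, hl, hyl⟩ := Set.nonempty_of_ncard_ne_zero (hpos y)
  obtain ⟨q, hqy, hqy'⟩ := hfar y
  have hql : q ∉ l := fun hq => hqy' ⟨hqy.symm, l, hl, hyl, hq⟩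
  obtain ⟨w, ⟨hwl, -, m, hm, hqm, hwm⟩, -⟩ := hproj q l hl hql
  have htwo : 1 < {l | l ∈ S.lines ∧ w ∈ l}.ncard :=
    (Set.one_lt_ncard_iff (Set.finite_of_ncard_ne_zero (hpos w))).2
      ⟨l, m, ⟨hl, hwl⟩, ⟨hm, hwm⟩, fun h => hql (h ▸ hqm)⟩
  rw [hcount w, ← hcount y] at htwo
  obtain ⟨l₁, l₂, ⟨hl₁, hy₁⟩, ⟨hl₂, hy₂⟩, hne⟩ :=
    (Set.one_lt_ncard_iff (Set.finite_of_ncard_ne_zero (hpos y))).1 htwo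
  exact ⟨l₁, hl₁, l₂, hl₂, hy₁, hy₂, hne⟩

/-- There are no triangles. -/
theorem eq_of_collinear_of_collinear {u v w : P} (h : S.IsLine u v w) (hu : S.Collinear p u)
    (hv : S.Collinear p v) : p = w := by
  obtain ⟨huv, huw, hvw, l, hl, hul, hvl, hwl⟩ := h
  by_cases hp : p ∈ l
  · rcases eq_or_eq_or_eq_of_mem_line hl hul hvl hwl huv huw hvw hp with rfl | rfl | rfl
    · exact absurd rfl hu.1
    · exact absurd rfl hv.1
    · rfl
  · obtain ⟨_, _, huniq⟩ := hGQ.2.2.2 p l hl hp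
    exact absurd ((huniq u ⟨hul, hu⟩).trans (huniq v ⟨hvl, hv⟩).symm) huv

theorem collinear_of_not_collinear_of_not_collinear {a b c : P} (h : S.IsLine a b c)
    (ha : ¬ S.Collinear p a) (hb : ¬ S.Collinear p b) : S.Collinear p c := by
  obtain ⟨hab, hac, hbc, l, hl, hal, hbl, hcl⟩ := h
  have hp : p ∉ l := fun hp => by
    rcases eq_or_eq_or_eq_of_mem_line hl hal hbl hcl hab hac hbc hp with rfl | rfl | rfl
    · exact hb ⟨hab, l, hl, hal, hbl⟩
    · exact ha ⟨hab.symm, l, hl, hbl, hal⟩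
    · exact ha ⟨hac.symm, l, hl, hcl, hal⟩
  obtain ⟨u, ⟨hul, hpu⟩, -⟩ := hGQ.2.2.2 p l hl hp
  rcases eq_or_eq_or_eq_of_mem_line hl hal hbl hcl hab hac hbc hul with rfl | rfl | rfl
  · exact absurd hpu ha
  · exact absurd hpu hb
  · exact hpu

/-- In a quadrangle `x z y z'`, the third points of the opposite sides `xz` and `z'y` are
collinear. -/
theorem collinear_of_quadrangle {z' a b : P} (hxy : x ≠ y) (hl : S.IsLine x z a)
    (hm : S.IsLine z' y b) (hzy : S.Collinear z y) (hxz' : S.Collinear x z') (hzz' : z ≠ z') :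
    S.Collinear a b := by
  have hl' : S.IsLine a z x := hl.swap_left.swap_right.swap_left
  refine hGQ.collinear_of_not_collinear_of_not_collinear hm (fun haz' => ?_) (fun hay => ?_)
  · exact hzz' (hGQ.eq_of_collinear_of_collinear hl'.swap_right haz'.symm hxz'.symm).symm
  · exact hxy (hGQ.eq_of_collinear_of_collinear hl' hay.symm hzy.symm).symm

theorem isLine_of_collinear {a b : P} (hab : S.Collinear a b) (ha : S.Collinear p a)
    (hb : S.Collinear p b) : S.IsLine a b p := by
  obtain ⟨c, hc⟩ := hab.exists_isLine
  rwa [hGQ.eq_of_collinear_of_collinear hc ha hb]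

theorem exists_projection {m : Finset P} (hm : m ∈ S.lines) (hym : y ∈ m) (hxy : x ≠ y)
    (hnc : ¬ S.Collinear x y) :
    ∃ z ∈ m, ∃ b a, S.IsLine z y b ∧ S.IsLine x z a := by
  have hxm : x ∉ m := fun hxm => hnc ⟨hxy, m, hm, hxm, hym⟩
  obtain ⟨z, ⟨hzm, hxz⟩, -⟩ := hGQ.2.2.2 x m hm hxm
  have hzy : z ≠ y := fun h => hnc (h ▸ hxz)
  obtain ⟨b, hbm, hbz, hby⟩ := exists_third_point hm z y
  obtain ⟨a, ha⟩ := hxz.exists_isLine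
  exact ⟨z, hzm, b, a, ⟨hzy, hbz.symm, hby.symm, m, hm, hzm, hym, hbm⟩, ha⟩

theorem exists_grid (hxy : x ≠ y) (hnc : ¬ S.Collinear x y) :
    ∃ z₀ a₀ z₁ b₁ a₁ b₀ e : P,
      S.IsLine x z₀ a₀ ∧ S.IsLine z₁ y b₁ ∧ S.IsLine a₁ b₀ e ∧
      S.IsLine x z₁ a₁ ∧ S.IsLine z₀ y b₀ ∧ S.IsLine a₀ b₁ e := by
  obtain ⟨m₀, hm₀, m₁, hm₁, hym₀, hym₁, hm₀₁⟩ := hGQ.exists_two_lines_through y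
  obtain ⟨z₀, hz₀, b₀, a₀, hc₂, hr₁⟩ := hGQ.exists_projection hm₀ hym₀ hxy hnc
  obtain ⟨z₁, hz₁, b₁, a₁, hr₂, hc₁⟩ := hGQ.exists_projection hm₁ hym₁ hxy hnc
  have hz₀₁ : z₀ ≠ z₁ := fun h =>
    hm₀₁ (S.unique_line m₀ hm₀ m₁ hm₁ z₀ y hc₂.1 hz₀ hym₀ (h ▸ hz₁) hym₁)
  have ha₀b₁ := hGQ.collinear_of_quadrangle hxy hr₁ hr₂ hc₂.collinear hc₁.collinear hz₀₁
  have ha₁b₀ := hGQ.collinear_of_quadrangle hxy hc₁ hc₂ hr₂.collinear hr₁.collinear hz₀₁.symm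
  obtain ⟨e, hc₃⟩ := ha₀b₁.exists_isLine
  have hb₁x : b₁ ≠ x := fun h => hnc (h ▸ hr₂.swap_left.swap_right.collinear.symm)
  have ha₀y : a₀ ≠ y := fun h => hnc (h ▸ hr₁.swap_right.collinear)
  have ha₀z₁ : a₀ ≠ z₁ := fun h =>
    hxy (hGQ.eq_of_collinear_of_collinear hr₁.swap_left.swap_right.swap_left
      (h ▸ hr₂.collinear.symm) hc₂.collinear.symm).symm
  have hb₁z₀ : b₁ ≠ z₀ := fun h =>
    hxy (hGQ.eq_of_collinear_of_collinear hr₂.swap_right hc₁.collinear (h ▸ hr₁.collinear))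
  have hea₁ := hGQ.collinear_of_quadrangle hb₁x hc₃.swap_left hc₁.swap_left
    hr₁.swap_right.collinear.symm hr₂.swap_right.collinear.symm ha₀z₁
  have heb₀ := hGQ.collinear_of_quadrangle ha₀y hc₃ hc₂
    hr₂.swap_left.swap_right.collinear.symm hr₁.swap_left.swap_right.collinear.symm hb₁z₀
  exact ⟨z₀, a₀, z₁, b₁, a₁, b₀, e, hr₁, hr₂, hGQ.isLine_of_collinear ha₁b₀ hea₁ heb₀,
    hc₁, hc₂, hc₃⟩

end IsGQ

namespace Rep

variable {R : Type*} [Group R] (ρ : S.Rep R)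

theorem mul_self (x : P) : ρ.r x * ρ.r x = 1 := by
  rw [← sq, ← ρ.order_two x, pow_orderOf_eq_one]

theorem mul_eq (h : S.IsLine x y z) : ρ.r x * ρ.r y = ρ.r z :=
  let ⟨hxy, hxz, hyz, l, hl, hx, hy, hz⟩ := h
  ρ.line_rel l hl x hx y hy z hz hxy hxz hyz

theorem mul_comm {t : ℕ} (hGQ : S.IsGQ t) (x y : P) : ρ.r x * ρ.r y = ρ.r y * ρ.r x := by
  by_cases hxy : x = y
  · rw [hxy]
  by_cases hc : S.Collinear x y
  · obtain ⟨z, h⟩ := hc.exists_isLine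
    rw [ρ.mul_eq h, ρ.mul_eq h.swap_left]
  obtain ⟨z₀, a₀, z₁, b₁, a₁, b₀, e, hr₁, hr₂, hr₃, hc₁, hc₂, hc₃⟩ := hGQ.exists_grid hxy hc
  exact mul_comm_of_grid (ρ.mul_self x) (ρ.mul_self y) (ρ.mul_self z₀) (ρ.mul_self z₁)
    (ρ.mul_self b₁) (ρ.mul_eq hr₁.swap_left.swap_right.swap_left) (ρ.mul_eq hr₂.swap_right)
    (ρ.mul_eq hr₃.swap_left) (ρ.mul_eq hc₁.swap_left.swap_right.swap_left)
    (ρ.mul_eq hc₂.swap_right) (ρ.mul_eq hc₃.swap_right)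

end Rep

end SlimPLS

/-- If `S` is a `(2,t)`-GQ and `(R, ψ)` is a representation of `S`
(not necessarily faithful), then `R` is an elementary abelian 2-group. -/
theorem gq_rep_elementary_abelian {P : Type*} (S : SlimPLS P) {t : ℕ}
    (hGQ : S.IsGQ t) {R : Type*} [Group R] (ρ : S.Rep R) :
    (∀ a b : R, a * b = b * a) ∧ (∀ a : R, a * a = 1) := by
  have hcomm : ∀ a b : R, a * b = b * a :=
    Subgroup.mul_comm_of_closure_eq_top ρ.gen (by
      rintro _ ⟨x, rfl⟩ _ ⟨y, rfl⟩
      exact ρ.mul_comm hGQ x y)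
  refine ⟨hcomm, Subgroup.mul_self_eq_one_of_closure_eq_top ρ.gen hcomm ?_⟩
  rintro _ ⟨x, rfl⟩
  exact ρ.mul_self x
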